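/- Let ℓ be a norm on ℝ^p invariant under the group W_p of signed permutations of coordinates, and let d(L,M) = ℓ(Ψ[L,M]) be the associated invariant metric on Gr_{p,q}. Then every H-curve is a geodesic for d: if L(s) is an H-curve with invariants 0 ≤ a_1 ≤ … ≤ a_p and s_1 < s_2 < s_3 with a_p(s_3 − s_1) ≤ π/2, then d(L(s_1), L(s_2)) + d(L(s_2), L(s_3)) = d(L(s_1), L(s_3)). -/

import Mathlib

/-! Along an `H`-curve the frames `v(s)` and `v(t)` are orthonormal with
`⟪v_i(s), v_j(t)⟫ = δ_ij cos (a_i (t - s))`, so their Gram matrix is diagonal. Singular values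
of the Gram matrix do not depend on the orthonormal bases chosen (a change of bases multiplies it
by orthogonal matrices on both sides), so as long as `a_p (t - s) ≤ π/2` the Jordan angles
between `L(s)` and `L(t)` are exactly `(t - s) • a`. Hence `d(L(s), L(t)) = (t - s) ℓ(a)`, which
is additive along the curve by the homogeneity of `ℓ`. -/

open Module Submodule Real Set
open scoped RealInnerProductSpace

/-- Decreasing rearrangement of a tuple of reals. -/
noncomputable def sortDesc {n : ℕ} (v : Fin n → ℝ) : Fin n → ℝ :=
  fun i => v (Tuple.sort v i.rev)

/-- The singular values of a real `m × n` matrix, listed in decreasing order: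
the square roots of the eigenvalues of `A * Aᵀ`. -/
noncomputable def matSingVals {m n : ℕ} (A : Matrix (Fin m) (Fin n) ℝ) : Fin m → ℝ :=
  sortDesc fun i => Real.sqrt ((Matrix.isHermitian_mul_conjTranspose_self A).eigenvalues i)

/-- `v` is an orthonormal basis of the subspace `L`. -/
def IsONBasisOf {n m : ℕ} (v : Fin m → EuclideanSpace ℝ (Fin n))
    (L : Submodule ℝ (EuclideanSpace ℝ (Fin n))) : Prop :=
  Orthonormal ℝ v ∧ Submodule.span ℝ (Set.range v) = L

/-- The matrix `⟨e i, f j⟩`. -/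
noncomputable def grammian {n m : ℕ} (e f : Fin m → EuclideanSpace ℝ (Fin n)) :
    Matrix (Fin m) (Fin m) ℝ :=
  Matrix.of fun i j => ⟪e i, f j⟫

open Classical in
/-- `λ_1[L,M] ≥ … ≥ λ_p[L,M]`: the singular values of the matrix `⟨e i, f j⟩` formed from
orthonormal bases of `L` and `M` (independent of the choice of bases). -/
noncomputable def subSingVals (p : ℕ) {n : ℕ}
    (L M : Submodule ℝ (EuclideanSpace ℝ (Fin n))) : Fin p → ℝ :=
  if h : (∃ e : Fin p → EuclideanSpace ℝ (Fin n), IsONBasisOf e L) ∧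
         (∃ f : Fin p → EuclideanSpace ℝ (Fin n), IsONBasisOf f M)
  then matSingVals (grammian h.1.choose h.2.choose)
  else 0

/-- The Jordan angles `Ψ_1[L,M] ≤ … ≤ Ψ_p[L,M]`. -/
noncomputable def jordanAngles (p : ℕ) {n : ℕ}
    (L M : Submodule ℝ (EuclideanSpace ℝ (Fin n))) : Fin p → ℝ :=
  fun i => Real.arccos (subSingVals p L M i)

/-- The orbit of a vector under the group `W_p` of signed permutations of the coordinates. -/
def WOrbit {p : ℕ} (v : Fin p → ℝ) : Set (Fin p → ℝ) :=
  {w | ∃ (σ : Equiv.Perm (Fin p)) (ε : Fin p → ℝ),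
    (∀ i, ε i = 1 ∨ ε i = -1) ∧ w = fun i => ε i * v (σ i)}

open scoped Matrix

section SortDesc

variable {n : ℕ}

theorem sortDesc_eq_of_map_eq {v w : Fin n → ℝ}
    (h : Multiset.map v Finset.univ.val = Multiset.map w Finset.univ.val) :
    sortDesc v = sortDesc w := by
  have hperm : (List.ofFn v).Perm (List.ofFn w) := by
    rw [Fin.univ_val_map, Fin.univ_val_map] at h
    exact Multiset.coe_eq_coe.mp h
  have hsorted : v ∘ Tuple.sort v = w ∘ Tuple.sort w := by
    refine List.ofFn_injective (List.Perm.eq_of_sortedLE ?_ ?_ ?_)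
    · exact (Tuple.monotone_sort v).sortedLE_ofFn
    · exact (Tuple.monotone_sort w).sortedLE_ofFn
    · exact ((Equiv.Perm.ofFn_comp_perm _ v).trans hperm).trans
        (Equiv.Perm.ofFn_comp_perm _ w).symm
  funext i
  exact congrFun hsorted i.rev

theorem sortDesc_eq_self_of_antitone {v : Fin n → ℝ} (hv : Antitone v) : sortDesc v = v := by
  have hrev : Monotone (v ∘ Fin.revPerm) := fun i j hij => hv (Fin.rev_le_rev.mpr hij)
  have h := Tuple.unique_monotone (Tuple.monotone_sort v) hrev
  funext i
  simpa [sortDesc] using congrFun h i.rev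

end SortDesc

section SingularValues

variable {m n : ℕ}

theorem matSingVals_eq_of_charpoly_eq {A B : Matrix (Fin m) (Fin n) ℝ}
    (h : (A * Aᵀ).charpoly = (B * Bᵀ).charpoly) : matSingVals A = matSingVals B := by
  rw [← Matrix.conjTranspose_eq_transpose_of_trivial,
    ← Matrix.conjTranspose_eq_transpose_of_trivial] at h
  unfold matSingVals
  rw [(Matrix.isHermitian_mul_conjTranspose_self A).eigenvalues_eq_eigenvalues_iff
    (Matrix.isHermitian_mul_conjTranspose_self B) |>.mpr h]

theorem matSingVals_orthogonal_mul_mul_orthogonal (A : Matrix (Fin m) (Fin n) ℝ)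
    {U : Matrix (Fin m) (Fin m) ℝ} {V : Matrix (Fin n) (Fin n) ℝ}
    (hU : Uᵀ * U = 1) (hV : V * Vᵀ = 1) : matSingVals (U * A * V) = matSingVals A := by
  apply matSingVals_eq_of_charpoly_eq
  have hconj : U * A * V * (U * A * V)ᵀ = U * (A * Aᵀ) * Uᵀ := by
    simp only [Matrix.transpose_mul, Matrix.mul_assoc, ← Matrix.mul_assoc V, hV, Matrix.one_mul]
  rw [hconj, Matrix.charpoly_mul_comm, ← Matrix.mul_assoc, hU, Matrix.one_mul]

theorem matSingVals_diagonal {d : Fin m → ℝ} (hd₀ : ∀ i, 0 ≤ d i) (hd : Antitone d) :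
    matSingVals (Matrix.diagonal d) = d := by
  set H := Matrix.isHermitian_mul_conjTranspose_self (Matrix.diagonal d)
  have hroots : Multiset.map H.eigenvalues Finset.univ.val =
      Multiset.map (fun i => d i * d i) Finset.univ.val := by
    have hcharpoly : (Matrix.diagonal d * (Matrix.diagonal d)ᴴ).charpoly =
        ((Multiset.map (fun i => d i * d i) Finset.univ.val).map
          (fun x => Polynomial.X - Polynomial.C x)).prod := by
      rw [Matrix.conjTranspose_eq_transpose_of_trivial, Matrix.diagonal_transpose,
        Matrix.diagonal_mul_diagonal, Matrix.charpoly_diagonal, Finset.prod_eq_multiset_prod,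
        Multiset.map_map]
      rfl
    have h := H.roots_charpoly_eq_eigenvalues
    rw [hcharpoly, Polynomial.roots_multiset_prod_X_sub_C, RCLike.ofReal_real_eq_id] at h
    exact h.symm
  unfold matSingVals
  rw [sortDesc_eq_of_map_eq (w := d), sortDesc_eq_self_of_antitone hd]
  have := congrArg (Multiset.map Real.sqrt) hroots
  simpa only [Multiset.map_map, Function.comp_def, Real.sqrt_mul_self (hd₀ _)] using this

end SingularValues

section Grammian

variable {n m : ℕ} {e f v w : Fin m → EuclideanSpace ℝ (Fin n)}

theorem grammian_transpose (e f : Fin m → EuclideanSpace ℝ (Fin n)) :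
    (grammian e f)ᵀ = grammian f e := by
  ext i j
  exact real_inner_comm (e j) (f i) |>.symm

theorem grammian_self_of_orthonormal (hv : Orthonormal ℝ v) : grammian v v = 1 := by
  ext i j
  exact orthonormal_iff_ite.mp hv i j

theorem grammian_mul_grammian_of_mem_span_left (hv : Orthonormal ℝ v)
    (he : ∀ i, e i ∈ span ℝ (range v))
    (f : Fin m → EuclideanSpace ℝ (Fin n)) : grammian e v * grammian v f = grammian e f := by
  ext i j
  obtain ⟨c, hc⟩ := (mem_span_range_iff_exists_fun ℝ).mp (he i)
  simp only [grammian, Matrix.mul_apply, Matrix.of_apply, ← hc, sum_inner,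
    real_inner_smul_left, hv.inner_left_fintype, conj_trivial]

theorem grammian_mul_grammian_of_mem_span_right (hv : Orthonormal ℝ v)
    (hf : ∀ j, f j ∈ span ℝ (range v))
    (e : Fin m → EuclideanSpace ℝ (Fin n)) : grammian e v * grammian v f = grammian e f := by
  rw [← Matrix.transpose_inj, Matrix.transpose_mul, grammian_transpose, grammian_transpose,
    grammian_transpose, grammian_mul_grammian_of_mem_span_left hv hf]

theorem IsONBasisOf.mem_span {L : Submodule ℝ (EuclideanSpace ℝ (Fin n))}
    (hv : IsONBasisOf v L) (he : IsONBasisOf e L) (i : Fin m) : e i ∈ span ℝ (range v) := by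
  rw [hv.2, ← he.2]
  exact subset_span ⟨i, rfl⟩

theorem subSingVals_eq_matSingVals_grammian {L M : Submodule ℝ (EuclideanSpace ℝ (Fin n))}
    (hv : IsONBasisOf v L) (hw : IsONBasisOf w M) :
    subSingVals m L M = matSingVals (grammian v w) := by
  have hex : (∃ e, IsONBasisOf e L) ∧ ∃ f, IsONBasisOf f M := ⟨⟨v, hv⟩, ⟨w, hw⟩⟩
  rw [subSingVals, dif_pos hex]
  have he := hex.1.choose_spec
  have hf := hex.2.choose_spec
  set e := hex.1.choose
  set f := hex.2.choose
  have hfactor : grammian e f = grammian e v * grammian v w * grammian w f := by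
    rw [Matrix.mul_assoc, grammian_mul_grammian_of_mem_span_right hw.1 (hw.mem_span hf),
      grammian_mul_grammian_of_mem_span_left hv.1 (hv.mem_span he)]
  have hU : (grammian e v)ᵀ * grammian e v = 1 := by
    rw [grammian_transpose, grammian_mul_grammian_of_mem_span_left he.1 (he.mem_span hv),
      grammian_self_of_orthonormal hv.1]
  have hV : grammian w f * (grammian w f)ᵀ = 1 := by
    rw [grammian_transpose, grammian_mul_grammian_of_mem_span_left hf.1 (hf.mem_span hw),
      grammian_self_of_orthonormal hw.1]
  rw [hfactor, matSingVals_orthogonal_mul_mul_orthogonal _ hU hV]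

end Grammian

section HCurve

variable {p n : ℕ} (a : Fin p → ℝ) (e f : Fin p → EuclideanSpace ℝ (Fin n))

noncomputable def hCurveFrame (s : ℝ) : Fin p → EuclideanSpace ℝ (Fin n) :=
  fun j => Real.cos (a j * s) • e j + Real.sin (a j * s) • f j

variable {a e f}

theorem inner_hCurveFrame (horth : Orthonormal ℝ (Sum.elim e f)) (s t : ℝ) (i j : Fin p) :
    ⟪hCurveFrame a e f s i, hCurveFrame a e f t j⟫ =
      if i = j then Real.cos (a i * (t - s)) else 0 := by
  have hinner := orthonormal_iff_ite.mp horth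
  have hee : ⟪e i, e j⟫ = if i = j then 1 else 0 := by simpa using hinner (.inl i) (.inl j)
  have hff : ⟪f i, f j⟫ = if i = j then 1 else 0 := by simpa using hinner (.inr i) (.inr j)
  have hef : ⟪e i, f j⟫ = 0 := by simpa using hinner (.inl i) (.inr j)
  have hfe : ⟪f i, e j⟫ = 0 := by simpa using hinner (.inr i) (.inl j)
  simp only [hCurveFrame, inner_add_left, inner_add_right, real_inner_smul_left,
    real_inner_smul_right, hee, hff, hef, hfe]
  split_ifs with hij
  · subst hij
    rw [mul_sub, Real.cos_sub]
    ring
  · ring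

theorem orthonormal_hCurveFrame (horth : Orthonormal ℝ (Sum.elim e f)) (s : ℝ) :
    Orthonormal ℝ (hCurveFrame a e f s) := by
  rw [orthonormal_iff_ite]
  intro i j
  simp [inner_hCurveFrame horth]

theorem grammian_hCurveFrame (horth : Orthonormal ℝ (Sum.elim e f)) (s t : ℝ) :
    grammian (hCurveFrame a e f s) (hCurveFrame a e f t) =
      Matrix.diagonal fun i => Real.cos (a i * (t - s)) := by
  ext i j
  exact inner_hCurveFrame horth s t i j

theorem jordanAngles_hCurve (ha₀ : ∀ j, 0 ≤ a j) (ha : Monotone a)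
    (horth : Orthonormal ℝ (Sum.elim e f)) {s t : ℝ} (hst : s ≤ t)
    (hnear : ∀ i, a i * (t - s) ≤ π / 2) :
    jordanAngles p (span ℝ (range (hCurveFrame a e f s))) (span ℝ (range (hCurveFrame a e f t)))
      = (t - s) • a := by
  have hangle₀ : ∀ i, 0 ≤ a i * (t - s) := fun i => mul_nonneg (ha₀ i) (sub_nonneg.mpr hst)
  have hcos₀ : ∀ i, 0 ≤ Real.cos (a i * (t - s)) := fun i =>
    Real.cos_nonneg_of_mem_Icc ⟨by linarith [hangle₀ i, Real.pi_pos], hnear i⟩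
  have hcos : Antitone fun i => Real.cos (a i * (t - s)) := fun i j hij =>
    Real.cos_le_cos_of_nonneg_of_le_pi (hangle₀ i) (by linarith [hnear j, Real.pi_pos])
      (mul_le_mul_of_nonneg_right (ha hij) (sub_nonneg.mpr hst))
  have hsing : subSingVals p (span ℝ (range (hCurveFrame a e f s)))
      (span ℝ (range (hCurveFrame a e f t))) = fun i => Real.cos (a i * (t - s)) := by
    rw [subSingVals_eq_matSingVals_grammian ⟨orthonormal_hCurveFrame horth s, rfl⟩
      ⟨orthonormal_hCurveFrame horth t, rfl⟩, grammian_hCurveFrame horth,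
      matSingVals_diagonal hcos₀ hcos]
  funext i
  rw [jordanAngles, hsing, Real.arccos_cos (hangle₀ i) (by linarith [hnear i, Real.pi_pos]),
    Pi.smul_apply, smul_eq_mul, mul_comm]

end HCurve

/-- `H`-curves are geodesics for every invariant metric `d(L,M) = ℓ(Ψ[L,M])` coming from a
`W_p`-invariant norm `ℓ`: along an `H`-curve, for `s₁ < s₂ < s₃` with `a_p (s₃ - s₁) ≤ π/2`,
the distance is additive: `d(L(s₁),L(s₂)) + d(L(s₂),L(s₃)) = d(L(s₁),L(s₃))`. -/
theorem HCurve_is_geodesic (p q : ℕ) (hp : 1 ≤ p)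
    (ℓ : (Fin p → ℝ) → ℝ)
    (hℓ_smul : ∀ (c : ℝ) (x), ℓ (c • x) = |c| * ℓ x)
    (a : Fin p → ℝ) (ha0 : ∀ j, 0 ≤ a j) (hamono : Monotone a)
    (e f : Fin p → EuclideanSpace ℝ (Fin (p + q)))
    (horth : Orthonormal ℝ (Sum.elim e f))
    (Lc : ℝ → Submodule ℝ (EuclideanSpace ℝ (Fin (p + q))))
    (hLc : Lc = fun s => Submodule.span ℝ
      (Set.range fun j : Fin p => Real.cos (a j * s) • e j + Real.sin (a j * s) • f j))
    (s₁ s₂ s₃ : ℝ) (h12 : s₁ < s₂) (h23 : s₂ < s₃)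
    (hnear : a ⟨p - 1, by omega⟩ * (s₃ - s₁) ≤ π / 2) :
    ℓ (jordanAngles p (Lc s₁) (Lc s₂)) + ℓ (jordanAngles p (Lc s₂) (Lc s₃)) =
      ℓ (jordanAngles p (Lc s₁) (Lc s₃)) := by
  have hlast : ∀ i, a i ≤ a ⟨p - 1, by omega⟩ := fun i =>
    hamono (Fin.mk_le_mk.mpr (by omega))
  have hangles : ∀ x y, x ≤ y → y - x ≤ s₃ - s₁ →
      jordanAngles p (Lc x) (Lc y) = (y - x) • a := by
    intro x y hxy hle
    subst hLc
    exact jordanAngles_hCurve ha0 hamono horth hxy fun i =>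
      (mul_le_mul (hlast i) hle (sub_nonneg.mpr hxy) (ha0 _)).trans hnear
  rw [hangles s₁ s₂ h12.le (by linarith), hangles s₂ s₃ h23.le (by linarith),
    hangles s₁ s₃ (by linarith) le_rfl, hℓ_smul, hℓ_smul, hℓ_smul,
    abs_of_nonneg (sub_nonneg.mpr h12.le), abs_of_nonneg (sub_nonneg.mpr h23.le),
    abs_of_nonneg (by linarith : 0 ≤ s₃ - s₁)]
  ring
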